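/- arXiv:hep-th/9811118 — 4 statements merged into one kernel-verified Lean document; each statement's English description precedes it below -/
import Mathlib

section
/- Let G(n) := n · lg(n) + 2 · (n − 2^(lg n)) for n ≥ 1. If n₁ + n₂ = n₁' + n₂' are two decompositions of the same positive integer with (n₁')² + (n₂')² ≥ n₁² + n₂² (all terms positive), then G(n₁') + G(n₂') ≥ G(n₁) + G(n₂). -/
/-- The amount of the optimal binary tree over `n` elements. -/
def G (n : ℕ) : ℕ := n * Nat.log 2 n + 2 * (n - 2 ^ (Nat.log 2 n))

lemma G_step (n : ℕ) (hn : 1 ≤ n) : G (n + 1) = G n + Nat.log 2 n + 2 := by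
  set k := Nat.log 2 n with hk
  have hpow : 2 ^ k ≤ n := Nat.pow_log_le_self 2 (by omega)
  have hlt : n < 2 ^ (k + 1) := Nat.lt_pow_succ_log_self (by norm_num) n
  rcases lt_or_eq_of_le (show n + 1 ≤ 2 ^ (k+1) by omega) with h | h
  · have hlog : Nat.log 2 (n+1) = k :=
      Nat.log_eq_of_pow_le_of_lt_pow (by omega) h
    simp only [G, hlog, ← hk]
    have : 2 ^ k ≤ n + 1 := by omega
    ring_nf
    omega
  · have hlog : Nat.log 2 (n+1) = k + 1 := by
      rw [h]; exact Nat.log_pow (by norm_num) (k+1)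
    have hp : 0 < 2 ^ k := pow_pos (by norm_num) k
    obtain ⟨q, hq⟩ : ∃ q, 2 ^ k = q + 1 := ⟨2 ^ k - 1, by omega⟩
    have h2 : 2 ^ (k + 1) = 2 * q + 2 := by rw [pow_succ]; omega
    have hn' : n = 2 * q + 1 := by omega
    simp only [G, hlog, ← hk]
    rw [hn', hq, h2, show 2*q+1+1 - (2*q+2) = 0 from by omega,
      show 2*q+1 - (q+1) = q from by omega]
    ring

lemma G_exchange (x y : ℕ) (hx : 1 ≤ x) (hxy : x ≤ y) :
    G (x + 1) + G y ≤ G x + G (y + 1) := by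
  rw [G_step x hx, G_step y (le_trans hx hxy)]
  have := Nat.log_mono_right (b := 2) hxy
  omega

lemma G_move (d : ℕ) : ∀ a b : ℕ, 1 ≤ a → a + d ≤ b + 1 →
    G (a + d) + G b ≤ G a + G (b + d) := by
  induction d with
  | zero => intro a b _ _; simp
  | succ d ih =>
    intro a b ha hab
    have h1 : G (a + d + 1) + G b ≤ G (a + d) + G (b + 1) :=
      G_exchange (a + d) b (by omega) (by omega)
    have h2 : G (a + d) + G (b + 1) ≤ G a + G (b + 1 + d) :=
      ih a (b + 1) ha (by omega)
    have : b + 1 + d = b + (d + 1) := by omega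
    rw [this] at h2
    calc G (a + (d+1)) + G b = G (a + d + 1) + G b := by ring_nf
      _ ≤ G (a + d) + G (b + 1) := h1
      _ ≤ G a + G (b + (d + 1)) := h2

lemma G_helper (a b a' b' : ℕ) (ha : 1 ≤ a) (ha' : 1 ≤ a')
    (hab : a ≤ b) (hab' : a' ≤ b')
    (hsum : a + b = a' + b') (hsq : a ^ 2 + b ^ 2 ≤ a' ^ 2 + b' ^ 2) :
    G a + G b ≤ G a' + G b' := by
  have hle : a' ≤ a := by
    by_contra h
    push_neg at h
    nlinarith
  obtain ⟨d, hd⟩ : ∃ d, a = a' + d := ⟨a - a', by omega⟩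
  have hb' : b' = b + d := by omega
  subst hd hb'
  exact G_move d a' b ha' (by omega)

theorem G_unsymmetric_divisions (n₁ n₂ n₁' n₂' : ℕ)
    (h₁ : 1 ≤ n₁) (h₂ : 1 ≤ n₂) (h₁' : 1 ≤ n₁') (h₂' : 1 ≤ n₂')
    (hsum : n₁ + n₂ = n₁' + n₂')
    (hsq : n₁ ^ 2 + n₂ ^ 2 ≤ n₁' ^ 2 + n₂' ^ 2) :
    G n₁ + G n₂ ≤ G n₁' + G n₂' := by
  rcases le_total n₁ n₂ with h | h <;> rcases le_total n₁' n₂' with h' | h'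
  · exact G_helper n₁ n₂ n₁' n₂' h₁ h₁' h h' hsum hsq
  · have := G_helper n₁ n₂ n₂' n₁' h₁ h₂' h h' (by omega) (by omega)
    omega
  · have := G_helper n₂ n₁ n₁' n₂' h₂ h₁' h h' (by omega) (by omega)
    omega
  · have := G_helper n₂ n₁ n₂' n₁' h₂ h₂' h h' (by omega) (by omega)
    omega
end

section
/- Let G(n) := n · lg(n) + 2 · (n − 2^(lg n)). For every positive integer ν, G(2ν + 1) = (2ν + 1) + G(ν) + G(ν + 1), and G(2ν) = 2ν + 2 · G(ν). -/
theorem G_split (ν : ℕ) (hν : 1 ≤ ν) :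
    G (2 * ν + 1) = (2 * ν + 1) + G ν + G (ν + 1) ∧
    G (2 * ν) = 2 * ν + 2 * G ν := by
  set k := Nat.log 2 ν with hk
  have h1 : 2 ^ k ≤ ν := Nat.pow_log_le_self 2 (by omega)
  have h2 : ν < 2 ^ (k + 1) := Nat.lt_pow_succ_log_self (by norm_num) ν
  have hlog2ν : Nat.log 2 (2 * ν) = k + 1 :=
    Nat.log_eq_of_pow_le_of_lt_pow (by rw [pow_succ]; omega) (by rw [pow_succ, pow_succ]; omega)
  have hlog2ν1 : Nat.log 2 (2 * ν + 1) = k + 1 :=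
    Nat.log_eq_of_pow_le_of_lt_pow (by rw [pow_succ]; omega) (by rw [pow_succ, pow_succ]; omega)
  by_cases hb : ν + 1 < 2 ^ (k + 1)
  · have hlogν1 : Nat.log 2 (ν + 1) = k :=
      Nat.log_eq_of_pow_le_of_lt_pow (by omega) hb
    simp only [G, hlog2ν, hlog2ν1, hlogν1, ← hk]
    rw [pow_succ] at *
    constructor <;> ring_nf <;> omega
  · have he : ν + 1 = 2 ^ (k + 1) := by omega
    have hlogν1 : Nat.log 2 (ν + 1) = k + 1 := by
      rw [he, Nat.log_pow (by norm_num)]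
    simp only [G, hlog2ν, hlog2ν1, hlogν1, ← hk]
    rw [pow_succ] at *
    constructor <;> ring_nf <;> omega
end

section
/- Let n ≥ 1 and m with 1 ≤ m ≤ n, and write n = ν·m + r with ν = ⌊n/m⌋ and 0 ≤ r < m. For any m-tuple (n₁, …, n_m) of positive integers with n₁ + ⋯ + n_m = n, the sum ∑ G(n_i) is at least (m − r)·G(ν) + r·G(ν + 1), where G(k) := k · lg(k) + 2 · (k − 2^(lg k)). -/
/-!
`G` is discretely convex: `G (k + 1) - G k` is `0` at `k = 0` and `lg k + 2` afterwards, which is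
nondecreasing. For such a function the line through `(ν, G ν)` and `(ν + 1, G (ν + 1))` lies below
`G` at every natural number. Summing it over the parts `n_i`, whose sum is `m ν + r`, gives exactly
`(m - r) G ν + r G (ν + 1)`.
-/

section DiscreteConvexity

variable {g : ℕ → ℤ}

theorem tangent_le_of_monotone_increment (hg : Monotone fun k => g (k + 1) - g k) (a x : ℕ) :
    g a + (x - a) * (g (a + 1) - g a) ≤ g x := by
  rcases le_total a x with hax | hxa
  · induction x, hax using Nat.le_induction with
    | base => simp
    | succ x hax ih =>
      have := hg hax
      push_cast at ih ⊢
      linarith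
  · induction hxa using Nat.decreasingInduction with
    | self => simp
    | of_succ x hxa ih =>
      have := hg hxa.le
      push_cast at ih ⊢
      linarith

theorem balanced_le_sum_of_monotone_increment (hg : Monotone fun k => g (k + 1) - g k)
    {m n : ℕ} (u : Fin m → ℕ) (hsum : ∑ i, u i = n) :
    ((m : ℤ) - (n % m : ℕ)) * g (n / m) + (n % m : ℕ) * g (n / m + 1) ≤ ∑ i, g (u i) := by
  have hdiv : ((m * (n / m) + n % m : ℕ) : ℤ) = ∑ i, (u i : ℤ) := by
    rw [Nat.div_add_mod, ← hsum, Nat.cast_sum]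
  calc ((m : ℤ) - (n % m : ℕ)) * g (n / m) + (n % m : ℕ) * g (n / m + 1)
      = ∑ i, (g (n / m) + (u i - (n / m : ℕ)) * (g (n / m + 1) - g (n / m))) := by
        rw [Finset.sum_add_distrib, ← Finset.sum_mul, Finset.sum_sub_distrib, ← hdiv]
        simp only [Finset.sum_const, Finset.card_univ, Fintype.card_fin, nsmul_eq_mul]
        push_cast
        ring
    _ ≤ ∑ i, g (u i) := Finset.sum_le_sum fun i _ => tangent_le_of_monotone_increment hg _ _

end DiscreteConvexity

theorem G_succ_of_ne_zero {k : ℕ} (hk : k ≠ 0) : G (k + 1) = G k + Nat.log 2 k + 2 := by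
  have hlow : 2 ^ Nat.log 2 k ≤ k := Nat.pow_log_le_self 2 hk
  have hhigh : k + 1 ≤ 2 ^ (Nat.log 2 k + 1) := Nat.lt_pow_succ_log_self one_lt_two k
  rw [pow_succ] at hhigh
  rcases hhigh.lt_or_eq with hlt | hpow
  · have hlog : Nat.log 2 (k + 1) = Nat.log 2 k :=
      Nat.log_eq_of_pow_le_of_lt_pow (hlow.trans k.le_succ) (by rwa [pow_succ])
    simp only [G, hlog, add_one_mul]
    omega
  · have hlog : Nat.log 2 (k + 1) = Nat.log 2 k + 1 := by
      rw [hpow, ← pow_succ, Nat.log_pow one_lt_two]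
    simp only [G, hlog, pow_succ, add_one_mul, mul_add_one]
    omega

theorem monotone_G_increment : Monotone fun k => (G (k + 1) : ℤ) - G k := by
  refine monotone_nat_of_le_succ fun k => ?_
  rcases eq_or_ne k 0 with rfl | hk
  · rw [G_succ_of_ne_zero one_ne_zero]
    simp [G]
  · simp only [G_succ_of_ne_zero hk, G_succ_of_ne_zero k.succ_ne_zero]
    push_cast
    have := Nat.log_mono_right (b := 2) k.le_succ
    omega

theorem optimal_division_minimizes_general (n m : ℕ) (hm : 1 ≤ m)
    (u : Fin m → ℕ) (hsum : ∑ i, u i = n) :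
    (m - n % m) * G (n / m) + (n % m) * G (n / m + 1) ≤ ∑ i, G (u i) := by
  have key := balanced_le_sum_of_monotone_increment (g := fun k => G k) monotone_G_increment u hsum
  rw [← Nat.cast_sub (Nat.mod_lt n hm).le] at key
  exact_mod_cast key

theorem optimal_division_minimizes (n m : ℕ) (hn : 1 ≤ n) (hm : 1 ≤ m) (hmn : m ≤ n)
    (u : Fin m → ℕ) (hu : ∀ i, 1 ≤ u i) (hsum : ∑ i, u i = n) :
    (m - n % m) * G (n / m) + (n % m) * G (n / m + 1) ≤ ∑ i, G (u i) :=
  optimal_division_minimizes_general n m hm u hsum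
end

section
/- Let G(n) := n · lg(n) + 2 · (n − 2^(lg n)). For n ≥ 2 and 2 ≤ m ≤ n, define pmin(n, m) := n·(m−1) + (m−r)·G(ν) + r·G(ν+1) where ν = ⌊n/m⌋ and r = n − ν·m. Then pmin(n, m+1) > pmin(n, m) for all 2 ≤ m < n. -/
/-- Minimal tree-function value over preoptimized complete trees over `n`
elements whose minimal partition has `m` parts. -/
def pmin (n m : ℕ) : ℕ :=
  n * (m - 1) + (m - n % m) * G (n / m) + (n % m) * G (n / m + 1)


lemma G_succ (k : ℕ) (hk : 1 ≤ k) :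
    G (k + 1) = G k + (Nat.log 2 k + 2) := by
  have h1 : 2 ^ Nat.log 2 k ≤ k := Nat.pow_log_le_self 2 (by omega)
  have h2 : k < 2 ^ (Nat.log 2 k + 1) := Nat.lt_pow_succ_log_self (by norm_num) k
  rcases eq_or_lt_of_le (show k + 1 ≤ 2 ^ (Nat.log 2 k + 1) from h2) with he | hlt
  · have hlog : Nat.log 2 (k+1) = Nat.log 2 k + 1 := by
      rw [he]; exact Nat.log_pow (by norm_num : (1:ℕ) < 2) _
    unfold G
    rw [hlog]
    have he' : (k:ℤ) + 1 = 2 ^ (Nat.log 2 k + 1) := by exact_mod_cast he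
    zify [h1, he.ge]
    push_cast
    linear_combination he'
  · have hlog : Nat.log 2 (k+1) = Nat.log 2 k :=
      Nat.log_eq_of_pow_le_of_lt_pow (le_trans h1 (Nat.le_succ k)) hlt
    unfold G
    rw [hlog]
    zify [h1, le_trans h1 (Nat.le_succ k)]
    ring

lemma G_le (a D : ℕ) (ha : 1 ≤ a) (b : ℕ) (hab : a ≤ b)
    (h : ∀ k, a ≤ k → k < b → Nat.log 2 k + 2 ≤ D) :
    G b ≤ G a + (b - a) * D := by
  induction b, hab using Nat.le_induction with
  | base => simp
  | succ b hab ih =>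
    have hb1 : 1 ≤ b := le_trans ha hab
    rw [G_succ b hb1]
    have h1 : G b ≤ G a + (b - a) * D := ih (fun k hk hk' => h k hk (by omega))
    have h2 : Nat.log 2 b + 2 ≤ D := h b hab (by omega)
    have h3 : (b + 1 - a) * D = (b - a) * D + D := by
      have hh : b + 1 - a = (b - a) + 1 := by omega
      rw [hh, Nat.succ_mul]
    omega

lemma G_ident (x : ℕ) (hx : 1 ≤ x) :
    x * (Nat.log 2 x + 2) = G x + 2 ^ (Nat.log 2 x + 1) := by
  have h1 : 2 ^ Nat.log 2 x ≤ x := Nat.pow_log_le_self 2 (by omega)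
  unfold G
  zify [h1]
  rw [pow_succ]
  ring

theorem pmin_strict_mono (n m : ℕ) (hn : 2 ≤ n) (hm : 2 ≤ m) (hmn : m < n) :
    pmin n m < pmin n (m + 1) := by
  unfold pmin
  set ν := n / m with hνdef
  set r := n % m with hrdef
  set ν' := n / (m+1) with hν'def
  set r' := n % (m+1) with hr'def
  have hν1 : 1 ≤ ν := (Nat.one_le_div_iff (by omega)).2 (by omega)
  have hν'1 : 1 ≤ ν' := (Nat.one_le_div_iff (by omega)).2 (by omega)
  have hνν' : ν' ≤ ν := Nat.div_le_div_left (by omega) (by omega)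
  have hr : r < m := Nat.mod_lt _ (by omega)
  have hr' : r' < m + 1 := Nat.mod_lt _ (by omega)
  have hn1 : m * ν + r = n := Nat.div_add_mod n m
  have hn2 : (m + 1) * ν' + r' = n := Nat.div_add_mod n (m+1)
  set L := Nat.log 2 ν with hLdef
  set L' := Nat.log 2 ν' with hL'def
  have hL'L : L' ≤ L := Nat.log_mono_right hνν'
  have hP' : 2 ^ L' ≤ ν' := Nat.pow_log_le_self 2 (by omega)
  have hPν' : ν' < 2 ^ (L' + 1) := Nat.lt_pow_succ_log_self (by norm_num) ν'
  have hPν : 2 ^ L ≤ ν := Nat.pow_log_le_self 2 (by omega)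
  have hLle : L ≤ L' + 1 := by
    have hQ : 1 ≤ 2 ^ (L' + 1) := Nat.one_le_two_pow
    have hmν : m * ν < m * (2 ^ (L' + 1) * 2) := by nlinarith
    have hν2 : ν < 2 ^ (L' + 1) * 2 := lt_of_mul_lt_mul_left hmν (by omega)
    have : L < L' + 2 := Nat.log_lt_of_lt_pow (by omega) (by rw [pow_succ]; exact hν2)
    omega
  rw [G_succ ν hν1, G_succ ν' hν'1, ← hLdef, ← hL'def]
  have e1 : (m - r) * G ν + r * (G ν + (L + 2)) = m * G ν + r * (L + 2) := by
    rw [Nat.mul_add, ← Nat.add_assoc, ← Nat.add_mul, Nat.sub_add_cancel hr.le]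
  have e2 : (m + 1 - r') * G ν' + r' * (G ν' + (L' + 2))
      = (m + 1) * G ν' + r' * (L' + 2) := by
    rw [Nat.mul_add, ← Nat.add_assoc, ← Nat.add_mul, Nat.sub_add_cancel hr'.le]
  have e3 : n * (m + 1 - 1) = n * (m - 1) + n := by
    have h4 : m + 1 - 1 = (m - 1) + 1 := by omega
    rw [h4, Nat.mul_succ]
  rw [Nat.add_assoc, Nat.add_assoc, e1, e2, e3]
  clear_value ν r ν' r' L L'
  have hmp : (m + 1) * G ν' = m * G ν' + G ν' := by ring
  have key : m * G ν + r * (L + 2) < n + ((m + 1) * G ν' + r' * (L' + 2)) := by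
    rcases (by omega : L = L' ∨ L = L' + 1) with hA | hB
    · -- Case L = L'
      have hGb : G ν ≤ G ν' + (ν - ν') * (L + 2) :=
        G_le ν' (L + 2) hν'1 ν hνν' (fun k hk hk' => by
          have hlk : Nat.log 2 k ≤ Nat.log 2 ν := Nat.log_mono_right hk'.le
          omega)
      have hq : m * (ν - ν') + r = ν' + r' := by
        have hsub : m * (ν - ν') + m * ν' = m * ν := by
          rw [← Nat.mul_add]; congr 1; omega
        have h2 : (m + 1) * ν' = m * ν' + ν' := by ring
        omega
      have hbig : m * G ν + r * (L + 2)
          ≤ m * G ν' + (m * (ν - ν') + r) * (L + 2) := by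
        have h := Nat.mul_le_mul_left m hGb
        have hd : m * (G ν' + (ν - ν') * (L + 2))
            = m * G ν' + m * (ν - ν') * (L + 2) := by ring
        have he : (m * (ν - ν') + r) * (L + 2)
            = m * (ν - ν') * (L + 2) + r * (L + 2) := by ring
        omega
      rw [hq] at hbig
      have hident := G_ident ν' hν'1
      rw [← hL'def] at hident
      have h3ν : 3 * ν' ≤ (m + 1) * ν' := Nat.mul_le_mul_right _ (by omega)
      have hps : 2 ^ (L' + 1) = 2 * 2 ^ L' := by ring
      have hx1 : (ν' + r') * (L + 2) = ν' * (L' + 2) + r' * (L' + 2) := by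
        rw [hA]; ring
      omega
    · -- Case L = L' + 1
      have hν'P : ν' < 2 ^ L := by rw [hB]; exact hPν'
      have hGa : G (2 ^ L) ≤ G ν' + (2 ^ L - ν') * (L + 1) :=
        G_le ν' (L + 1) hν'1 (2 ^ L) hν'P.le (fun k hk hk' => by
          have hlk : Nat.log 2 k < L := by
            have : Nat.log 2 k < L' + 1 :=
              Nat.log_lt_of_lt_pow (by omega) (by rw [← hB]; exact hk')
            omega
          omega)
      have hGb : G ν ≤ G (2 ^ L) + (ν - 2 ^ L) * (L + 2) :=
        G_le (2 ^ L) (L + 2) Nat.one_le_two_pow ν hPν (fun k hk hk' => by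
          have hlk : Nat.log 2 k ≤ Nat.log 2 ν := Nat.log_mono_right hk'.le
          omega)
      set s := 2 ^ L - ν' with hsdef
      set t := ν - 2 ^ L with htdef
      have hs : ν' + s = 2 ^ L := by omega
      have ht : 2 ^ L + t = ν := by omega
      have hident := G_ident ν' hν'1
      rw [← hL'def] at hident
      have hident' : ν' * (L + 1) = G ν' + 2 ^ L := by rw [hB]; exact hident
      have hidexp : ν' * (L + 1) = ν' * L + ν' := by ring
      have hG : G ν ≤ G ν' + s * (L + 1) + t * (L + 2) := by omega
      have hνe : ν = ν' + s + t := by omega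
      have hmν : m * ν = m * ν' + m * s + m * t := by rw [hνe]; ring
      have hkey : ν' + r' = m * s + m * t + r := by
        have h2 : (m + 1) * ν' = m * ν' + ν' := by ring
        omega
      have hbig : m * G ν + r * (L + 2)
          ≤ m * G ν' + m * (s * (L + 1)) + m * (t * (L + 2)) + r * (L + 2) := by
        have h := Nat.mul_le_mul_left m hG
        have hd : m * (G ν' + s * (L + 1) + t * (L + 2))
            = m * G ν' + m * (s * (L + 1)) + m * (t * (L + 2)) := by ring
        omega
      have hfin : m * (s * (L + 1)) + m * (t * (L + 2)) + r * (L + 2)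
          < n + G ν' + r' * (L' + 2) := by
        have hx1 : m * (s * (L + 1)) = m * s * L + m * s := by ring
        have hx2 : m * (t * (L + 2)) = m * t * L + 2 * (m * t) := by ring
        have hx3 : r * (L + 2) = r * L + 2 * r := by ring
        have hx4 : r' * (L' + 2) = r' * L + r' := by
          rw [show L' + 2 = L + 1 by omega]; ring
        have hkeyL : (ν' + r') * L = (m * s + m * t + r) * L := by rw [hkey]
        have hke1 : (ν' + r') * L = ν' * L + r' * L := by ring
        have hke2 : (m * s + m * t + r) * L = m * s * L + m * t * L + r * L := by ring
        have hms2 : 2 * ν' ≤ m * ν' := Nat.mul_le_mul_right _ (by omega)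
        have hss : 2 * s ≤ m * s := Nat.mul_le_mul_right _ (by omega)
        omega
      omega
  omega
end
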